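/- arXiv:2104.06364 — 3 statements merged into one kernel-verified Lean document; each statement's English description precedes it below -/
import Mathlib

section
/- Let f : [0,∞) → ℝ be locally bounded. If for every t ∈ [0,1] we have ε·f(t/ε) → 0 as ε → 0, then sup over t ∈ [0,1] of |ε·f(t/ε)| → 0 as ε → 0. -/
open Filter Set

/-- If `f : [0,∞) → ℝ` is locally bounded and `ε · f(t/ε) → 0` as `ε → 0⁺`
for every `t ∈ [0,1]`, then `sup_{t ∈ [0,1]} |ε · f(t/ε)| → 0` as `ε → 0⁺`. -/
theorem stmt_0 (f : ℝ → ℝ)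
    (hloc : ∀ R : ℝ, 0 ≤ R → ∃ C : ℝ, ∀ x ∈ Set.Icc (0 : ℝ) R, |f x| ≤ C)
    (hpt : ∀ t ∈ Set.Icc (0 : ℝ) 1,
      Tendsto (fun ε : ℝ => ε * f (t / ε)) (nhdsWithin 0 (Set.Ioi 0)) (nhds 0)) :
    Tendsto (fun ε : ℝ => ⨆ t : Set.Icc (0 : ℝ) 1, |ε * f ((t : ℝ) / ε)|)
      (nhdsWithin 0 (Set.Ioi 0)) (nhds 0) := by
  haveI : Nonempty (Set.Icc (0 : ℝ) 1) := ⟨⟨0, by norm_num⟩⟩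
  rw [Metric.tendsto_nhdsWithin_nhds]
  intro δ hδ
  have h1 := hpt 1 ⟨zero_le_one, le_refl 1⟩
  rw [Metric.tendsto_nhdsWithin_nhds] at h1
  obtain ⟨η₁, hη₁pos, hη₁⟩ := h1 (δ / 2) (by positivity)
  obtain ⟨C, hC⟩ := hloc (1 / η₁) (by positivity)
  have hC0 : 0 ≤ C :=
    le_trans (abs_nonneg _) (hC 0 ⟨le_refl 0, by positivity⟩)
  refine ⟨min η₁ (δ / (2 * (C + 1))), by positivity, ?_⟩
  intro ε hε hεlt
  have hε0 : 0 < ε := hε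
  rw [Real.dist_eq, sub_zero, abs_of_pos hε0, lt_min_iff] at hεlt
  obtain ⟨hεη₁, hεδ⟩ := hεlt
  -- key bound on each term
  have key : ∀ t : Set.Icc (0 : ℝ) 1, |ε * f ((t : ℝ) / ε)| ≤ ε * C + δ / 2 := by
    rintro ⟨t, ht0, ht1⟩
    set x := t / ε with hx
    have hx0 : 0 ≤ x := div_nonneg ht0 hε0.le
    by_cases hxle : x ≤ 1 / η₁
    · have : |f x| ≤ C := hC x ⟨hx0, hxle⟩
      calc |ε * f x| = ε * |f x| := by rw [abs_mul, abs_of_pos hε0]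
        _ ≤ ε * C := by nlinarith [abs_nonneg (f x)]
        _ ≤ ε * C + δ / 2 := by linarith
    · push_neg at hxle
      have hxpos : 0 < x := lt_trans (by positivity) hxle
      have hinv : (1 : ℝ) / x < η₁ := by
        rw [div_lt_iff₀ hxpos]
        rw [div_lt_iff₀ hη₁pos] at hxle
        nlinarith
      have hinvpos : (0 : ℝ) < 1 / x := by positivity
      have := hη₁ (x := 1 / x) hinvpos
        (by rw [Real.dist_eq, sub_zero, abs_of_pos hinvpos]; exact hinv)
      rw [Real.dist_eq, sub_zero, one_div_one_div] at this
      -- this : |1 / x * f x| < δ / 2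
      have hfx : |f x| < δ / 2 * x := by
        rw [abs_mul, abs_of_pos hinvpos] at this
        rw [div_mul_eq_mul_div, div_lt_iff₀ hxpos] at this
        nlinarith
      have hεx : ε * x = t := by rw [hx]; field_simp
      calc |ε * f x| = ε * |f x| := by rw [abs_mul, abs_of_pos hε0]
        _ ≤ ε * (δ / 2 * x) := by nlinarith
        _ = δ / 2 * (ε * x) := by ring
        _ = δ / 2 * t := by rw [hεx]
        _ ≤ δ / 2 := by nlinarith
        _ ≤ ε * C + δ / 2 := by nlinarith
  have hsup : (⨆ t : Set.Icc (0 : ℝ) 1, |ε * f ((t : ℝ) / ε)|) ≤ ε * C + δ / 2 :=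
    ciSup_le key
  have hsup0 : 0 ≤ ⨆ t : Set.Icc (0 : ℝ) 1, |ε * f ((t : ℝ) / ε)| :=
    Real.iSup_nonneg fun t => abs_nonneg _
  rw [Real.dist_eq, sub_zero, abs_of_nonneg hsup0]
  have : ε * C < δ / 2 := by
    have : ε * (C + 1) < δ / 2 := by
      rw [lt_div_iff₀ (by positivity : (0:ℝ) < 2 * (C + 1))] at hεδ
      nlinarith
    nlinarith
  linarith
end

section
/- For every m, n ∈ ℕ, the Hermite polynomials satisfy the orthogonality relation ∫ℝ H_m(x) H_n(x) exp(-x²/2)/√(2π) dx = δ_{m,n} · m!. -/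
open Polynomial MeasureTheory

private lemma herm_deriv (n : ℕ) :
    derivative (hermite (n + 1)) = C (n + 1 : ℤ) * hermite n := by
  induction n with
  | zero => simp [hermite_one, hermite_zero]
  | succ n ih =>
      have hC : (C ((n : ℤ) + 1 + 1)) = C ((n : ℤ) + 1) + 1 := by rw [C_add, C_1]
      push_cast
      rw [hermite_succ (n + 1), derivative_sub, derivative_mul, derivative_X, one_mul, ih,
        derivative_mul, derivative_C, zero_mul, hermite_succ n, hC]
      ring_nf

private lemma iter_deriv_herm_self (n : ℕ) :
    derivative^[n] (hermite n) = C (n.factorial : ℤ) := by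
  induction n with
  | zero => simp [hermite_zero]
  | succ n ih =>
      rw [Function.iterate_succ_apply, herm_deriv, iterate_derivative_C_mul, ih,
        ← C_mul, Nat.factorial_succ]
      push_cast
      ring_nf

private lemma iter_deriv_herm_lt {m n : ℕ} (h : m < n) :
    derivative^[n] (hermite m) = 0 := by
  obtain ⟨j, rfl⟩ : ∃ j, n = j + (m + 1) := ⟨n - (m + 1), by omega⟩
  rw [Function.iterate_add_apply, Function.iterate_succ_apply', iter_deriv_herm_self]
  simp [iterate_derivative_zero]

private lemma integrable_pow_gauss (k : ℕ) :
    Integrable fun x : ℝ => x ^ k * Real.exp (-(x ^ 2 / 2)) := by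
  have h := integrable_rpow_mul_exp_neg_mul_sq (b := 1/2) one_half_pos
    (s := (k : ℝ)) (lt_of_lt_of_le neg_one_lt_zero (Nat.cast_nonneg k))
  have heq : (fun x : ℝ => x ^ ((k : ℝ)) * Real.exp (-(1/2) * x ^ 2))
      = fun x : ℝ => x ^ k * Real.exp (-(x ^ 2 / 2)) := by
    funext x
    rw [Real.rpow_natCast]
    congr 1
    ring
  exact heq ▸ h

private lemma integrable_poly_gauss (q : ℤ[X]) :
    Integrable fun x : ℝ => (aeval x q) * Real.exp (-(x ^ 2 / 2)) := by
  induction q using Polynomial.induction_on' with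
  | add p q hp hq =>
      simp only [map_add, add_mul]
      exact hp.add hq
  | monomial k c =>
      have := (integrable_pow_gauss k).const_mul (c : ℝ)
      simpa [aeval_monomial, mul_assoc] using this

private lemma gauss_hasDerivAt (x : ℝ) :
    HasDerivAt (fun y : ℝ => Real.exp (-(y ^ 2 / 2))) (-x * Real.exp (-(x ^ 2 / 2))) x := by
  have h : HasDerivAt (fun y : ℝ => -(y ^ 2 / 2)) (-x) x := by
    exact (((hasDerivAt_pow 2 x).div_const 2).neg).congr_deriv (by norm_num)
  simpa [mul_comm] using h.exp

/-- Core integration by parts lemma. -/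
private lemma key (n : ℕ) (p : ℤ[X]) :
    ∫ x : ℝ, (aeval x p) * ((aeval x (hermite n)) * Real.exp (-(x ^ 2 / 2)))
      = ∫ x : ℝ, (aeval x (derivative^[n] p)) * Real.exp (-(x ^ 2 / 2)) := by
  induction n generalizing p with
  | zero => simp [hermite_zero]
  | succ n ih =>
      set G : ℝ → ℝ := fun y => Real.exp (-(y ^ 2 / 2)) with hG
      have hv : ∀ x : ℝ, HasDerivAt (fun y => (aeval y (hermite n)) * G y)
          (-((aeval x (hermite (n + 1))) * G x)) x := by
        intro x
        have h1 := (hermite n).hasDerivAt_aeval (𝕜 := ℝ) x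
        have h2 := gauss_hasDerivAt x
        have := h1.mul h2
        refine this.congr_deriv ?_
        rw [hermite_succ, map_sub, map_mul, aeval_X]
        simp only [hG]
        ring
      have hu : ∀ x : ℝ, HasDerivAt (fun y => (aeval y p : ℝ))
          (aeval x (derivative p)) x := fun x => p.hasDerivAt_aeval x
      have huv' : Integrable (fun x : ℝ => (aeval x p : ℝ) *
          (-((aeval x (hermite (n + 1))) * G x))) := by
        have := (integrable_poly_gauss (p * hermite (n + 1))).neg
        refine this.congr ?_
        filter_upwards with x
        simp only [Pi.neg_apply, map_mul, hG]
        ring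
      have hu'v : Integrable (fun x : ℝ => (aeval x (derivative p) : ℝ) *
          ((aeval x (hermite n)) * G x)) := by
        have := integrable_poly_gauss (derivative p * hermite n)
        refine this.congr ?_
        filter_upwards with x
        simp only [Pi.neg_apply, map_mul, hG]
        ring
      have huv : Integrable (fun x : ℝ => (aeval x p : ℝ) *
          ((aeval x (hermite n)) * G x)) := by
        have := integrable_poly_gauss (p * hermite n)
        refine this.congr ?_
        filter_upwards with x
        simp only [Pi.neg_apply, map_mul, hG]
        ring
      have hIBP := integral_mul_deriv_eq_deriv_mul_of_integrable (fun x _ => hu x) (fun x _ => hv x) huv' hu'v huv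
      have e1 : ∫ x : ℝ, (aeval x p) * ((aeval x (hermite (n + 1))) * G x)
          = - ∫ x : ℝ, (aeval x p) * (-((aeval x (hermite (n + 1))) * G x)) := by
        rw [← integral_neg]
        congr 1 with x
        ring
      rw [e1, hIBP, neg_neg, ih (derivative p), ← Function.iterate_succ_apply]

private lemma gauss_integral_val :
    ∫ x : ℝ, Real.exp (-(x ^ 2 / 2)) = Real.sqrt (2 * Real.pi) := by
  have h := integral_gaussian (1/2)
  rw [show (Real.pi / (1/2)) = 2 * Real.pi by ring] at h
  rw [← h]
  congr 1 with x
  congr 1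
  ring

private lemma main_int (m n : ℕ) :
    ∫ x : ℝ, (aeval x (hermite m)) * (aeval x (hermite n)) * Real.exp (-(x ^ 2 / 2))
      = if m = n then (m.factorial : ℝ) * Real.sqrt (2 * Real.pi) else 0 := by
  have base : ∀ a b : ℕ,
      ∫ x : ℝ, (aeval x (hermite a)) * (aeval x (hermite b)) * Real.exp (-(x ^ 2 / 2))
        = ∫ x : ℝ, (aeval x (derivative^[b] (hermite a))) * Real.exp (-(x ^ 2 / 2)) := by
    intro a b
    rw [← key b (hermite a)]
    congr 1 with x
    ring
  rcases lt_trichotomy m n with h | h | h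
  · rw [base m n, iter_deriv_herm_lt h, if_neg h.ne]
    simp
  · subst h
    rw [base m m, iter_deriv_herm_self, if_pos rfl]
    have : ∀ x : ℝ, (aeval x (C (m.factorial : ℤ)) : ℝ) * Real.exp (-(x ^ 2 / 2))
        = (m.factorial : ℝ) * Real.exp (-(x ^ 2 / 2)) := by
      intro x
      simp [aeval_C]
    simp_rw [this]
    rw [MeasureTheory.integral_const_mul, gauss_integral_val]
  · have hcomm : (fun x : ℝ => (aeval x (hermite m)) * (aeval x (hermite n)) *
        Real.exp (-(x ^ 2 / 2)))
        = fun x : ℝ => (aeval x (hermite n)) * (aeval x (hermite m)) *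
          Real.exp (-(x ^ 2 / 2)) := by
      funext x
      ring
    rw [hcomm, base n m, iter_deriv_herm_lt h, if_neg h.ne']
    simp

/-- Orthogonality of the probabilists' Hermite polynomials:
`∫ℝ H_m(x) H_n(x) exp(-x²/2)/√(2π) dx = δ_{m,n} · m!`. -/
theorem stmt_1 (m n : ℕ) :
    ∫ x : ℝ, (Polynomial.aeval x (Polynomial.hermite m)) *
        (Polynomial.aeval x (Polynomial.hermite n)) *
        (Real.exp (-x ^ 2 / 2) / Real.sqrt (2 * Real.pi)) =
      if m = n then (m.factorial : ℝ) else 0 := by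
  have hsqrt : Real.sqrt (2 * Real.pi) ≠ 0 := by positivity
  have hre : (fun x : ℝ => (aeval x (hermite m)) * (aeval x (hermite n)) *
      (Real.exp (-x ^ 2 / 2) / Real.sqrt (2 * Real.pi)))
      = fun x : ℝ => ((aeval x (hermite m)) * (aeval x (hermite n)) *
        Real.exp (-(x ^ 2 / 2))) * (Real.sqrt (2 * Real.pi))⁻¹ := by
    funext x
    rw [neg_div]
    ring
  rw [hre, integral_mul_const, main_int]
  split_ifs
  · rw [mul_assoc, mul_inv_cancel₀ hsqrt, mul_one]
  · simp
end

section
/- Let (X_t)_{t∈[s,T]} be a stochastic process with values in ℝ such that for some constant C and all s ≤ u ≤ v ≤ T, E[(∫_u^v X_r dr)²] is well-defined and E[X_u X_v] ≤ C·min(1, |u-v|^{-θ}) with θ > 1. Then E[(∫_s^t X_r dr)²] ≤ C'·(t - s) for all s ≤ t ≤ T with C' = 2C(1 + 1/(θ-1)). -/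
open MeasureTheory Set

/-- Truncated power-decay bound `1 ∧ x^{-θ}` (equal to `1` for `x ≤ 1`). -/
noncomputable def decayBound (θ x : ℝ) : ℝ := if x ≤ 1 then 1 else x ^ (-θ)

lemma decayBound_nonneg (θ x : ℝ) (hx : 0 ≤ x) : 0 ≤ decayBound θ x := by
  unfold decayBound
  split
  · exact zero_le_one
  · exact Real.rpow_nonneg hx _

lemma decayBound_measurable (θ : ℝ) : Measurable (fun x : ℝ => decayBound θ |x|) := by
  unfold decayBound
  apply Measurable.ite (measurableSet_le measurable_abs measurable_const) measurable_const
  fun_prop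

lemma decayBound_abs_le_one (θ x : ℝ) (hθ : 0 < θ) : decayBound θ |x| ≤ 1 := by
  unfold decayBound
  split
  · exact le_refl 1
  · rename_i h
    push_neg at h
    exact Real.rpow_le_one_of_one_le_of_nonpos h.le (by linarith)

lemma decayBound_even (θ x : ℝ) : decayBound θ |(-x)| = decayBound θ |x| := by
  rw [abs_neg]

lemma decayBound_integrableOn_Ioi (θ : ℝ) (hθ : 1 < θ) :
    IntegrableOn (fun x : ℝ => decayBound θ |x|) (Ioi 1) := by
  have h : IntegrableOn (fun x : ℝ => x ^ (-θ)) (Ioi 1) :=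
    integrableOn_Ioi_rpow_of_lt (by linarith) one_pos
  refine h.congr_fun (fun x hx => ?_) measurableSet_Ioi
  have hx1 : (1:ℝ) < x := hx
  rw [decayBound, abs_of_pos (by linarith), if_neg (not_le.mpr hx1)]

lemma decayBound_integrableOn_Ioi0 (θ : ℝ) (hθ : 1 < θ) :
    IntegrableOn (fun x : ℝ => decayBound θ |x|) (Ioi 0) := by
  rw [← Ioc_union_Ioi_eq_Ioi (zero_le_one), integrableOn_union]
  constructor
  · refine Integrable.mono' (g := fun _ : ℝ => (1:ℝ))
      ((integrableOn_const_iff (C := (1:ℝ))).mpr (Or.inr (by simp [Real.volume_Ioc])))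
      (decayBound_measurable θ).aestronglyMeasurable ?_
    filter_upwards with x
    rw [Real.norm_eq_abs, abs_of_nonneg (decayBound_nonneg θ _ (abs_nonneg x))]
    exact decayBound_abs_le_one θ x (by linarith)
  · exact decayBound_integrableOn_Ioi θ hθ

lemma decayBound_indicator_neg (θ : ℝ) :
    (fun x : ℝ => (Ici (0:ℝ)).indicator (fun y => decayBound θ |y|) (-x)) =
      (Iic (0:ℝ)).indicator (fun y => decayBound θ |y|) := by
  funext x
  by_cases hx : x ≤ 0
  · rw [indicator_of_mem (show -x ∈ Ici (0:ℝ) by simpa using hx),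
      indicator_of_mem (show x ∈ Iic (0:ℝ) from hx), abs_neg]
  · rw [indicator_of_notMem (show -x ∉ Ici (0:ℝ) by simpa using hx),
      indicator_of_notMem (show x ∉ Iic (0:ℝ) from hx)]

lemma decayBound_integrable (θ : ℝ) (hθ : 1 < θ) :
    Integrable (fun x : ℝ => decayBound θ |x|) := by
  rw [← integrableOn_univ, ← Iic_union_Ioi (a := (0:ℝ)), integrableOn_union]
  have hIci : IntegrableOn (fun x : ℝ => decayBound θ |x|) (Ici 0) := by
    rw [integrableOn_Ici_iff_integrableOn_Ioi]
    exact decayBound_integrableOn_Ioi0 θ hθ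
  constructor
  · have h2 : Integrable ((Ici (0:ℝ)).indicator (fun y => decayBound θ |y|)) :=
      (integrable_indicator_iff measurableSet_Ici).mpr hIci
    have h3 := h2.comp_neg
    rw [decayBound_indicator_neg θ] at h3
    exact (integrable_indicator_iff measurableSet_Iic).mp h3
  · exact decayBound_integrableOn_Ioi0 θ hθ

lemma decayBound_integral (θ : ℝ) (hθ : 1 < θ) :
    ∫ x : ℝ, decayBound θ |x| = 2 * (1 + 1 / (θ - 1)) := by
  have hInt := decayBound_integrable θ hθ
  rw [← intervalIntegral.integral_Iic_add_Ioi (hInt.integrableOn) (hInt.integrableOn) (b := (0:ℝ))]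
  have hIic : ∫ x in Iic (0:ℝ), decayBound θ |x| = ∫ x in Ioi (0:ℝ), decayBound θ |x| := by
    have hneg := integral_comp_neg_Iic (0:ℝ) (fun y => decayBound θ |y|)
    simp only [abs_neg, neg_zero] at hneg
    exact hneg
  have hIoi : ∫ x in Ioi (0:ℝ), decayBound θ |x| = 1 + 1 / (θ - 1) := by
    rw [← Ioc_union_Ioi_eq_Ioi (zero_le_one),
      setIntegral_union (Ioc_disjoint_Ioi le_rfl) measurableSet_Ioi
        ((decayBound_integrableOn_Ioi0 θ hθ).mono_set
          (Ioc_subset_Ioi_self))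
        (decayBound_integrableOn_Ioi θ hθ)]
    congr 1
    · rw [setIntegral_congr_fun measurableSet_Ioc
        (g := fun _ => (1:ℝ)) (fun x hx => by
          rw [decayBound, abs_of_pos hx.1, if_pos hx.2]),
        setIntegral_const, Real.volume_real_Ioc, smul_eq_mul]
      norm_num
    · rw [setIntegral_congr_fun measurableSet_Ioi
        (g := fun x => x ^ (-θ)) (fun x hx => by
          have hx1 : (1:ℝ) < x := hx
          rw [decayBound, abs_of_pos (by linarith), if_neg (not_le.mpr hx1)]),
        integral_Ioi_rpow_of_lt (by linarith) one_pos]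
      rw [Real.one_rpow, show -θ + 1 = -(θ - 1) by ring, div_neg, neg_div, neg_neg]
  rw [hIic, hIoi]; ring

/-- If a real process `X` on `[s,T]` satisfies
`E[X_u X_v] ≤ C · min(1,|v-u|^{-θ})` with `θ > 1` (and Fubini applies to the double
integral), then `E[(∫_s^t X_r dr)²] ≤ 2C(1 + 1/(θ-1)) · (t - s)` for `s ≤ t ≤ T`. -/
theorem stmt_7 {Ω : Type*} {mΩ : MeasurableSpace Ω} (P : Measure Ω) [IsProbabilityMeasure P]
    (X : ℝ → Ω → ℝ) (s T : ℝ) (hsT : s ≤ T) (C θ : ℝ) (hC : 0 ≤ C) (hθ : 1 < θ)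
    (hmeas : ∀ t, AEStronglyMeasurable (X t) P)
    (hint : ∀ u ∈ Set.Icc s T, ∀ v ∈ Set.Icc s T,
      Integrable (fun ω => X u ω * X v ω) P)
    (hcov : ∀ u ∈ Set.Icc s T, ∀ v ∈ Set.Icc s T,
      ∫ ω, X u ω * X v ω ∂P ≤ C * decayBound θ |v - u|)
    (hfub : ∀ t ∈ Set.Icc s T,
      ∫ ω, (∫ r in Set.Ioc s t, X r ω) ^ 2 ∂P =
        ∫ u in Set.Ioc s t, ∫ v in Set.Ioc s t, (∫ ω, X u ω * X v ω ∂P)) :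
    ∀ t ∈ Set.Icc s T,
      ∫ ω, (∫ r in Set.Ioc s t, X r ω) ^ 2 ∂P ≤ 2 * C * (1 + 1 / (θ - 1)) * (t - s) := by
  intro t ht
  obtain ⟨hst, htT⟩ := ht
  have hθ1 : 0 < θ - 1 := by linarith
  have hKfac : (0:ℝ) ≤ 1 + 1 / (θ - 1) := by positivity
  set K : ℝ := 2 * C * (1 + 1 / (θ - 1)) with hK
  have hK0 : 0 ≤ K := by positivity
  rw [hfub t ⟨hst, htT⟩]
  -- inner bound
  have hinner : ∀ u ∈ Ioc s t, (∫ v in Ioc s t, ∫ ω, X u ω * X v ω ∂P) ≤ K := by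
    intro u hu
    have huT : u ∈ Icc s T := ⟨hu.1.le, hu.2.trans htT⟩
    by_cases hI : IntegrableOn (fun v => ∫ ω, X u ω * X v ω ∂P) (Ioc s t)
    · have hGint : Integrable (fun v : ℝ => C * decayBound θ |v - u|) := by
        have := ((decayBound_integrable θ hθ).comp_sub_right u).const_mul C
        simpa using this
      calc (∫ v in Ioc s t, ∫ ω, X u ω * X v ω ∂P)
          ≤ ∫ v in Ioc s t, C * decayBound θ |v - u| := by
            refine setIntegral_mono_on hI hGint.integrableOn measurableSet_Ioc
              (fun v hv => hcov u huT v ⟨hv.1.le, hv.2.trans htT⟩)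
        _ ≤ ∫ v : ℝ, C * decayBound θ |v - u| := by
            refine setIntegral_le_integral hGint ?_
            filter_upwards with v
            exact mul_nonneg hC (decayBound_nonneg θ _ (abs_nonneg _))
        _ = C * ∫ v : ℝ, decayBound θ |v - u| := integral_const_mul _ _
        _ = C * ∫ v : ℝ, decayBound θ |v| := by
            congr 1
            exact integral_sub_right_eq_self (fun v => decayBound θ |v|) u
        _ = K := by rw [decayBound_integral θ hθ]; rw [hK]; ring
    · rw [integral_undef hI]
      exact hK0
  by_cases hO : IntegrableOn (fun u => ∫ v in Ioc s t, ∫ ω, X u ω * X v ω ∂P) (Ioc s t)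
  · calc (∫ u in Ioc s t, ∫ v in Ioc s t, ∫ ω, X u ω * X v ω ∂P)
        ≤ ∫ _u in Ioc s t, K := by
          refine setIntegral_mono_on hO
            ((integrableOn_const_iff (C := K)).mpr (Or.inr (by simp [Real.volume_Ioc])))
            measurableSet_Ioc hinner
      _ = K * (t - s) := by
          rw [setIntegral_const, Real.volume_real_Ioc_of_le hst, smul_eq_mul]
          ring
  · rw [integral_undef hO]
    exact mul_nonneg hK0 (by linarith)
end
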